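/- Let λ be a regular uncountable cardinal. Suppose G*₀ ⊆ Q⁰_λ is (<ℵ₁)-directed with respect to ≤⁰ and fil(G*₀) is a weakly reasonable ultrafilter on λ. Then F₀ = {f_p : p ∈ G*₀} is a dominating family in ^λλ. In particular, |G*₀| ≥ 𝔡_λ. -/

import Mathlib

open Set Ordinal Cardinal

noncomputable section

namespace Sh830

/-- `D` is a (proper) ultrafilter on the set `Z` of ordinals. -/
def IsUltraOn (Z : Set Ordinal) (D : Set (Set Ordinal)) : Prop :=
  (∀ A ∈ D, A ⊆ Z) ∧ Z ∈ D ∧ ∅ ∉ D ∧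
  (∀ A B : Set Ordinal, A ∈ D → A ⊆ B → B ⊆ Z → B ∈ D) ∧
  (∀ A B : Set Ordinal, A ∈ D → B ∈ D → A ∩ B ∈ D) ∧
  (∀ A : Set Ordinal, A ⊆ Z → A ∈ D ∨ Z \ A ∈ D)

/-- `D` is an ultrafilter on `λ`, where `λ` is identified with the set of ordinals `< λ`. -/
def IsUltrafilterOn (l : Ordinal) (D : Set (Set Ordinal)) : Prop :=
  IsUltraOn (Iio l) D

/-- `D` is uniform: every member of `D` has cardinality `λ`. -/
def IsUniformOn (l : Ordinal) (D : Set (Set Ordinal)) : Prop :=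
  ∀ A ∈ D, #A = #(Iio l)

/-- `C` is a club (closed and unbounded) subset of `λ`. -/
def IsClubIn (C : Set Ordinal) (l : Ordinal) : Prop :=
  C ⊆ Iio l ∧
  (∀ δ, δ < l → δ ≠ 0 → sSup (C ∩ Iio δ) = δ → δ ∈ C) ∧
  (∀ α, α < l → ∃ β ∈ C, α < β)

/-- The quotient `D/f = {A ⊆ λ : f⁻¹(A) ∈ D}`. -/
def quotUF (l : Ordinal) (D : Set (Set Ordinal)) (f : Ordinal → Ordinal) :
    Set (Set Ordinal) :=
  {A | A ⊆ Iio l ∧ Iio l ∩ f ⁻¹' A ∈ D}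

/-- The family `F_λ` of all non-decreasing functions `λ → λ` with unbounded range. -/
def Flam (l : Ordinal) : Set (Ordinal → Ordinal) :=
  {f | (∀ α, α < l → f α < l) ∧ (∀ α β, α ≤ β → β < l → f α ≤ f β) ∧
    (∀ γ, γ < l → ∃ α, α < l ∧ γ ≤ f α)}

/-- `D` is weakly reasonable: for every `f ∈ F_λ` there is a club `C` of `λ` with
`∪ {[δ, δ + f δ) : δ ∈ C} ∉ D`. -/
def WeaklyReasonable (l : Ordinal) (D : Set (Set Ordinal)) : Prop :=
  ∀ f ∈ Flam l, ∃ C, IsClubIn C l ∧ (⋃ δ ∈ C, Ico δ (δ + f δ)) ∉ D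

/-- The order type of a set of ordinals: the (unique) ordinal order-isomorphic to it. -/
def setOtp (S : Set Ordinal) : Ordinal :=
  sInf {o : Ordinal | Nonempty (Iio o ≃o S)}

/-- `min(β/E)`: the least element of the `E`-equivalence class of `β`. -/
def minClass (E : Ordinal → Ordinal → Prop) (β : Ordinal) : Ordinal :=
  sInf {γ | E γ β}

/-- The function `f_E` associated with an equivalence relation `E`:
`f_E α = otp {β < α : β = min(β/E) < min(α/E)}`. -/
def fEquiv (E : Ordinal → Ordinal → Prop) (α : Ordinal) : Ordinal :=
  setOtp {β | β < α ∧ β = minClass E β ∧ minClass E β < minClass E α}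

/-- The equivalence relation `E_C` associated with a club `C`:
`α E_C β` iff `(∀ γ ∈ C)(α < γ ↔ β < γ)`. -/
def clubRel (C : Set Ordinal) (α β : Ordinal) : Prop :=
  ∀ γ ∈ C, (α < γ ↔ β < γ)

/-- The quotient `D/C = D/E_C = D/f_{E_C}`. -/
def quotClub (l : Ordinal) (D : Set (Set Ordinal)) (C : Set Ordinal) :
    Set (Set Ordinal) :=
  quotUF l D (fEquiv (clubRel C))

/-- A strategy for Odd in the game `⅁_D`: given `i < λ`, Even's moves `β_j = α_{2j}`
for `j ≤ i`, and Odd's previous moves `γ_j = α_{2j+1}` for `j < i`, it produces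
Odd's move `γ_i = α_{2i+1}`. -/
def OddStr : Type 1 :=
  (i : Ordinal) → ((j : Ordinal) → j ≤ i → Ordinal) → ((j : Ordinal) → j < i → Ordinal) → Ordinal

/-- A legal position of the game just before Odd's `i`-th move. -/
def IsPosition (l i : Ordinal) (β γ : Ordinal → Ordinal) : Prop :=
  i < l ∧ (∀ j, j ≤ i → β j < l) ∧ (∀ j, j < i → β j < γ j ∧ γ j < l) ∧
  (∀ j, j < i → γ j < β (j + 1)) ∧
  (∀ j, j ≤ i → Order.IsSuccLimit j → β j = sSup (γ '' Iio j))

/-- A complete legal play of the game of length `λ`: `β i` is `α_{2i}`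
(Even's move) and `γ i` is `α_{2i+1}` (Odd's move). -/
def IsPlay (l : Ordinal) (β γ : Ordinal → Ordinal) : Prop :=
  (∀ i, i < l → β i < l ∧ γ i < l) ∧ (∀ i, i < l → β i < γ i) ∧
  (∀ i, i + 1 < l → γ i < β (i + 1)) ∧
  (∀ i, i < l → Order.IsSuccLimit i → β i = sSup (γ '' Iio i))

/-- `st` is a legal strategy for Odd: at every legal position it produces a legal move,
i.e. an ordinal `α_{2i+1}` with `α_{2i} < α_{2i+1} < λ`. -/
def IsOddStrategy (l : Ordinal) (st : OddStr) : Prop :=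
  ∀ i β γ, IsPosition l i β γ →
    β i < st i (fun j _ => β j) (fun j _ => γ j) ∧
    st i (fun j _ => β j) (fun j _ => γ j) < l

/-- The play `(β, γ)` follows the strategy `st` of Odd. -/
def FollowsOdd (l : Ordinal) (st : OddStr) (β γ : Ordinal → Ordinal) : Prop :=
  ∀ i, i < l → γ i = st i (fun j _ => β j) (fun j _ => γ j)

/-- `st` is winning for Odd in `⅁_D`: in every play following it, Even loses, i.e.
`∪ {[α_{2i+1}, α_{2i+2}) : i < λ} ∉ D`. -/
def OddWinsWith (l : Ordinal) (D : Set (Set Ordinal)) (st : OddStr) : Prop :=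
  ∀ β γ, IsPlay l β γ → FollowsOdd l st β γ →
    (⋃ i ∈ Iio l, Ico (γ i) (β (i + 1))) ∉ D

/-- The next element of `C` above `δ`, i.e. `min (C \ (δ+1))`. -/
def nxt (C : Set Ordinal) (δ : Ordinal) : Ordinal := sInf (C ∩ Ioi δ)

/-- A condition of the forcing notion `Q¹_λ`; here `Z^p_δ = [δ, nxt C δ)` and
`d δ` is the ultrafilter `d^p_δ` on `Z^p_δ`. -/
structure Q1 (l : Ordinal) where
  γ : Ordinal
  C : Set Ordinal
  d : Ordinal → Set (Set Ordinal)
  γ_lt : γ < l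
  club : IsClubIn C l
  lim : ∀ δ ∈ C, Order.IsSuccLimit δ
  ultra : ∀ δ ∈ C, IsUltraOn (Ico δ (nxt C δ)) (d δ)

/-- The order of `Q¹_λ`. -/
def Q1le (l : Ordinal) (p q : Q1 l) : Prop :=
  p.γ ≤ q.γ ∧ p.C ∩ Iio p.γ ⊆ q.C ∧ q.C ⊆ p.C ∧
  ∀ δ ∈ q.C, ∀ A ∈ q.d δ,
    ∃ ζ ∈ p.C ∩ Ico δ (nxt q.C δ), A ∩ Ico ζ (nxt p.C ζ) ∈ p.d ζ

/-- A condition of the forcing notion `Q⁰_λ`; here `Z^p_δ = [δ, nxt C δ)` and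
`d δ` is the ultrafilter `d^p_δ` on `Z^p_δ`. -/
structure Q0 (l : Ordinal) where
  C : Set Ordinal
  d : Ordinal → Set (Set Ordinal)
  club : IsClubIn C l
  lim : ∀ δ ∈ C, Order.IsSuccLimit δ
  ultra : ∀ δ ∈ C, IsUltraOn (Ico δ (nxt C δ)) (d δ)

/-- The order relation of `Q⁰_λ`, on the underlying data. -/
def Q0leAux (Cp : Set Ordinal) (dp : Ordinal → Set (Set Ordinal))
    (Cq : Set Ordinal) (dq : Ordinal → Set (Set Ordinal)) : Prop :=
  Cq ⊆ Cp ∧ ∀ δ ∈ Cq, ∀ A ∈ dq δ,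
    ∃ ζ ∈ Cp ∩ Ico δ (nxt Cq δ), A ∩ Ico ζ (nxt Cp ζ) ∈ dp ζ

/-- The order `≤_{Q⁰_λ}`. -/
def Q0le (l : Ordinal) (p q : Q0 l) : Prop := Q0leAux p.C p.d q.C q.d

/-- The relation `≤*_{Q⁰_λ}`: for some `α < λ` the restrictions beyond `α` are
`≤_{Q⁰_λ}`-related. -/
def Q0leStar (l : Ordinal) (p q : Q0 l) : Prop :=
  ∃ α, α < l ∧ Q0leAux (p.C \ Iio α) p.d (q.C \ Iio α) q.d

/-- `fil(p) = {A ⊆ λ : (∃ ε < λ)(∀ δ ∈ C^p \ ε)(A ∩ Z^p_δ ∈ d^p_δ)}`. -/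
def fil (l : Ordinal) (p : Q0 l) : Set (Set Ordinal) :=
  {A | A ⊆ Iio l ∧ ∃ ε, ε < l ∧ ∀ δ ∈ p.C, ε ≤ δ → A ∩ Ico δ (nxt p.C δ) ∈ p.d δ}

/-- `fil(G*) = ∪ {fil(p) : p ∈ G*}`. -/
def filG (l : Ordinal) (G : Set (Q0 l)) : Set (Set Ordinal) := ⋃ p ∈ G, fil l p

/-- The relation `≤⁰`: `p ≤⁰ q` iff `fil(p) ⊆ fil(q)`. -/
def le0 (l : Ordinal) (p q : Q0 l) : Prop := fil l p ⊆ fil l q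

/-- `G` is `(<c)`-directed with respect to `le`: `G` is nonempty and every subset of `G`
of cardinality `< c` has an upper bound in `G`. -/
def DirLtOn (l : Ordinal) (c : Cardinal.{1}) (G : Set (Q0 l))
    (le : Q0 l → Q0 l → Prop) : Prop :=
  G.Nonempty ∧ ∀ S : Set (Q0 l), S ⊆ G → #S < c → ∃ r ∈ G, ∀ p ∈ S, le p r

/-- The sum `⊕^e {d_x : x ∈ X}` of ultrafilters `d x` on `Z x` along an ultrafilter `e`
on `X`. -/
def ufSum (X : Set Ordinal) (e : Set (Set Ordinal)) (Z : Ordinal → Set Ordinal)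
    (d : Ordinal → Set (Set Ordinal)) : Set (Set Ordinal) :=
  {A | A ⊆ (⋃ x ∈ X, Z x) ∧ {x | x ∈ X ∧ Z x ∩ A ∈ d x} ∈ e}

/-- The function `f_p` associated with `p ∈ Q⁰_λ`: `f_p α` is the member of `C^p` with
`otp (C^p ∩ f_p α) = ω·α + ω`. -/
def fP (l : Ordinal) (p : Q0 l) (α : Ordinal) : Ordinal :=
  sInf {β | β ∈ p.C ∧ setOtp (p.C ∩ Iio β) = Ordinal.omega0 * α + Ordinal.omega0}

/-- The space `^λλ` (functions below `l` matter). -/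
def funSp (l : Ordinal) : Set (Ordinal → Ordinal) := {f | ∀ α, α < l → f α < l}

/-- `F` is a dominating family in `^λλ`. -/
def IsDominating (l : Ordinal) (F : Set (Ordinal → Ordinal)) : Prop :=
  ∀ g ∈ funSp l, ∃ f ∈ F, ∃ α, α < l ∧ ∀ β, α < β → β < l → g β < f β

/-- The dominating number `𝔡_λ`. -/
def dLam (l : Ordinal) : Cardinal.{1} :=
  sInf {c : Cardinal | ∃ F : Set (Ordinal → Ordinal),
    F ⊆ funSp l ∧ IsDominating l F ∧ #F = c}

/-- `S` is non-stationary in `λ`. -/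
def NonStatIn (S : Set Ordinal) (l : Ordinal) : Prop :=
  ∃ C, IsClubIn C l ∧ S ∩ C = ∅

/-- `F` is a club-dominating family in `^λλ`. -/
def IsClubDominating (l : Ordinal) (F : Set (Ordinal → Ordinal)) : Prop :=
  ∀ g ∈ funSp l, ∃ f ∈ F, NonStatIn {β | β < l ∧ f β ≤ g β} l

/-- The club-dominating number `𝔡_{cl(λ)}`. -/
def dClubLam (l : Ordinal) : Cardinal.{1} :=
  sInf {c : Cardinal | ∃ F : Set (Ordinal → Ordinal),
    F ⊆ funSp l ∧ IsClubDominating l F ∧ #F = c}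

/-- `A` is a nowhere dense subset of the space `^λλ` (with basic open sets determined
by initial segments). -/
def IsNwd (l : Ordinal) (A : Set (Ordinal → Ordinal)) : Prop :=
  A ⊆ funSp l ∧
  ∀ s ∈ funSp l, ∀ α, α < l → ∃ t ∈ funSp l, ∃ α', α ≤ α' ∧ α' < l ∧
    (∀ β, β < α → t β = s β) ∧ ∀ f ∈ funSp l, (∀ β, β < α' → f β = t β) → f ∉ A

/-- `A` belongs to the ideal `M^λ_{λ,λ}`, the `(<λ)`-complete ideal generated by the
nowhere dense subsets of `^λλ`. -/
def InMIdeal (l : Ordinal) (A : Set (Ordinal → Ordinal)) : Prop :=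
  A ⊆ funSp l ∧ ∃ θ, θ < l ∧ ∃ B : Ordinal → Set (Ordinal → Ordinal),
    (∀ i, i < θ → IsNwd l (B i)) ∧ A ⊆ ⋃ i ∈ Iio θ, B i

/-- The covering number `cov(M^λ_{λ,λ})`. -/
def covM (l : Ordinal) : Cardinal.{1} :=
  sInf {c : Cardinal | ∃ S : Set (Set (Ordinal → Ordinal)),
    (∀ A ∈ S, InMIdeal l A) ∧ funSp l ⊆ ⋃₀ S ∧ #S = c}

/-!
Given `g : λ → λ`, iterate: `g_{n+1} δ = sup_{ξ < nxt C_n δ} g_n ξ + nxt C_n δ` is non-decreasing,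
so weak reasonableness gives a club `C_{n+1} ⊆ C_n` with `⋃_{δ ∈ C_{n+1}} [δ, δ + g_{n+1} δ)`
outside the ultrafilter. The complements of these countably many sets lie in `fil r` for a single
`r ∈ G*₀`, by `(<ℵ₁)`-directedness. Beyond some `ε_n`, every block `Z^r_δ` meets the `n`-th
complement, and the block starting at `nxt C^r η` lies in `[η, f_r η)`; a point `ζ ≥ η` outside
the `n`-th union has `g_n η ≤ ζ`, so `g_n η < f_r η` for `η ∈ C_n` beyond `ε_n`. Finally, for
`β` large let `η` be the last point of `⋂ C_n` up to `β`: closure of `⋂ C_n` gives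
`β < nxt C_n η` for some `n`, so `g β ≤ g_n β < g_{n+1} η < f_r η ≤ f_r β`.
-/

universe u v

section Ordinals

theorem eq_of_orderIso_Iio {a b : Ordinal} (e : Iio a ≃o Iio b) : a = b := by
  have h : typeLT (Iio a) = typeLT (Iio b) := Ordinal.type_eq.2 ⟨e.toRelIsoLT⟩
  simpa only [Ordinal.type_lt_Iio, Ordinal.lift_inj] using h

theorem setOtp_eq_of_orderIso {S : Set Ordinal} {a : Ordinal} (e : Iio a ≃o S) :
    setOtp S = a :=
  le_antisymm (csInf_le' ⟨e⟩)
    (le_csInf ⟨a, ⟨e⟩⟩ fun _ ⟨e'⟩ => (eq_of_orderIso_Iio (e.trans e'.symm)).le)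

theorem iSup_lt_of_countable {l : Ordinal.{u}} (hl : ℵ₀ < l.cof) {ι : Type v} [Countable ι]
    {s : ι → Ordinal.{u}} (hs : ∀ i, s i < l) : ⨆ i, s i < l := by
  refine Ordinal.lift_iSup_lt_of_lt_cof ?_ hs
  rw [← Ordinal.lift_cof]
  exact (Cardinal.lift_le_aleph0.2 Cardinal.mk_le_aleph0).trans_lt (Cardinal.aleph0_lt_lift.2 hl)

theorem iSup_Iio_lt_ord {κ : Cardinal.{u}} (hreg : κ.IsRegular) {x : Ordinal} (hx : x < κ.ord)
    {f : Ordinal → Ordinal} (hf : ∀ ξ < x, f ξ < κ.ord) : ⨆ ξ : Iio x, f ξ < κ.ord := by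
  refine Ordinal.lift_iSup_lt_of_lt_cof ?_ fun ξ => hf ξ ξ.2
  rw [Cardinal.mk_Iio_ordinal, ← Ordinal.lift_cof, hreg.cof_ord, Cardinal.lift_lift,
    Cardinal.lift_lt]
  exact Cardinal.lt_ord.1 hx

theorem omega0_mul_add_omega0_lt_ord {κ : Cardinal} (hunc : ℵ₀ < κ) {α : Ordinal}
    (hα : α < κ.ord) : ω * α + ω < κ.ord := by
  have hω : ω < κ.ord := by rwa [Cardinal.lt_ord, Ordinal.card_omega0]
  exact isPrincipal_add_ord hunc.le (isPrincipal_mul_ord hunc.le hω hα) hω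

end Ordinals

section Clubs

variable {l : Ordinal.{u}} {C C' : Set Ordinal.{u}} {δ : Ordinal.{u}}

theorem IsClubIn.nxt_mem_inter (hC : IsClubIn C l) (hδ : δ < l) : nxt C δ ∈ C ∩ Ioi δ :=
  let ⟨β, hβC, hβ⟩ := hC.2.2 δ hδ
  csInf_mem ⟨β, hβC, hβ⟩

theorem IsClubIn.nxt_mem (hC : IsClubIn C l) (hδ : δ < l) : nxt C δ ∈ C :=
  (hC.nxt_mem_inter hδ).1

theorem IsClubIn.lt_nxt (hC : IsClubIn C l) (hδ : δ < l) : δ < nxt C δ :=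
  (hC.nxt_mem_inter hδ).2

theorem IsClubIn.nxt_lt (hC : IsClubIn C l) (hδ : δ < l) : nxt C δ < l :=
  hC.1 (hC.nxt_mem hδ)

theorem nxt_le_of_mem {x : Ordinal} (hx : x ∈ C) (hδx : δ < x) : nxt C δ ≤ x :=
  csInf_le' ⟨hx, hδx⟩

theorem IsClubIn.nxt_mono (hC : IsClubIn C l) {δ' : Ordinal} (h : δ ≤ δ') (hδ' : δ' < l) :
    nxt C δ ≤ nxt C δ' :=
  nxt_le_of_mem (hC.nxt_mem hδ') (h.trans_lt (hC.lt_nxt hδ'))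

theorem IsClubIn.nxt_le_nxt_of_subset (hC' : IsClubIn C' l) (h : C' ⊆ C) (hδ : δ < l) :
    nxt C δ ≤ nxt C' δ :=
  nxt_le_of_mem (h (hC'.nxt_mem hδ)) (hC'.lt_nxt hδ)

theorem IsClubIn.sSup_mem (hC : IsClubIn C l) {S : Set Ordinal} (hS : S ⊆ C)
    (hne : S.Nonempty) (hlt : sSup S < l) : sSup S ∈ C := by
  by_cases hmem : sSup S ∈ S
  · exact hS hmem
  have hbdd : BddAbove S := ⟨l, fun y hy => (hC.1 (hS hy)).le⟩
  have hlt_sSup : ∀ y ∈ S, y < sSup S := fun y hy =>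
    (le_csSup hbdd hy).lt_of_ne fun h => hmem (h ▸ hy)
  obtain ⟨y, hy⟩ := hne
  refine hC.2.1 _ hlt ((zero_le (a := y)).trans_lt (hlt_sSup y hy)).ne' (le_antisymm ?_ ?_)
  · exact csSup_le ⟨y, hS hy, hlt_sSup y hy⟩ fun z hz => hz.2.le
  · exact csSup_le_csSup ⟨sSup S, fun z hz => hz.2.le⟩ ⟨y, hy⟩
      fun z hz => ⟨hS hz, hlt_sSup z hz⟩

theorem IsClubIn.iSup_mem (hC : IsClubIn C l) {ι : Type v} [Nonempty ι] {s : ι → Ordinal}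
    (hs : ∀ i, s i ∈ C) (hlt : ⨆ i, s i < l) : ⨆ i, s i ∈ C :=
  hC.sSup_mem (range_subset_iff.2 hs) (range_nonempty s) hlt

theorem IsClubIn.sSup_inter_Iic_mem (hC : IsClubIn C l) {x : Ordinal} (hx : x < l)
    (hne : (C ∩ Iic x).Nonempty) : sSup (C ∩ Iic x) ∈ C :=
  hC.sSup_mem inter_subset_left hne ((csSup_le hne fun _ hy => hy.2).trans_lt hx)

theorem IsClubIn.iInter {ι : Type v} [Countable ι] [Nonempty ι] (hl : ℵ₀ < l.cof)
    {C : ι → Set Ordinal} (hC : ∀ i, IsClubIn (C i) l) : IsClubIn (⋂ i, C i) l := by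
  inhabit ι
  refine ⟨(iInter_subset C default).trans (hC default).1, fun δ hδ h0 hsup => ?_, fun α hα => ?_⟩
  · have hne : ((⋂ i, C i) ∩ Iio δ).Nonempty := by
      rw [nonempty_iff_ne_empty]
      rintro he
      rw [he, csSup_empty] at hsup
      exact h0 hsup.symm
    refine mem_iInter.2 fun i => ?_
    rw [← hsup] at hδ ⊢
    exact (hC i).sSup_mem (inter_subset_left.trans (iInter_subset C i)) hne hδ
  let y : ℕ → Ordinal := fun k => Nat.rec α (fun _ β => ⨆ i, nxt (C i) β) k
  have hy_lt : ∀ k, y k < l := by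
    intro k
    induction k with
    | zero => exact hα
    | succ k ih => exact iSup_lt_of_countable hl fun i => (hC i).nxt_lt ih
  have hnxt_le : ∀ k i, nxt (C i) (y k) ≤ y (k + 1) := fun k i =>
    le_ciSup Ordinal.bddAbove_of_small i
  have hY : ∀ i, ⨆ k, y k = ⨆ k, nxt (C i) (y k) := fun i =>
    le_antisymm (ciSup_mono Ordinal.bddAbove_of_small fun k => ((hC i).lt_nxt (hy_lt k)).le)
      (ciSup_le fun k => (hnxt_le k i).trans (le_ciSup Ordinal.bddAbove_of_small (k + 1)))
  have hYl : ⨆ k, y k < l := iSup_lt_of_countable hl hy_lt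
  refine ⟨⨆ k, y k, mem_iInter.2 fun i => ?_, ?_⟩
  · rw [hY i] at hYl ⊢
    exact (hC i).iSup_mem (fun k => (hC i).nxt_mem (hy_lt k)) hYl
  · calc α < nxt (C default) (y 0) := (hC default).lt_nxt hα
      _ ≤ y 1 := hnxt_le 0 default
      _ ≤ ⨆ k, y k := le_ciSup Ordinal.bddAbove_of_small 1

theorem IsClubIn.inter (hl : ℵ₀ < l.cof) (hC : IsClubIn C l) (hC' : IsClubIn C' l) :
    IsClubIn (C ∩ C') l := by
  rw [inter_eq_iInter]
  exact IsClubIn.iInter hl (Bool.rec hC' hC)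

theorem iSup_nxt_mem_iInter (hl : ℵ₀ < l.cof) {C : ℕ → Set Ordinal}
    (hC : ∀ n, IsClubIn (C n) l) (hanti : Antitone C) {η : Ordinal} (hη : η < l) :
    ⨆ n, nxt (C n) η ∈ ⋂ n, C n := by
  have hmono : Monotone fun n => nxt (C n) η := fun m n h =>
    (hC n).nxt_le_nxt_of_subset (hanti h) hη
  refine mem_iInter.2 fun n => ?_
  have hshift : ⨆ k, nxt (C k) η = ⨆ k, nxt (C (k + n)) η :=
    le_antisymm
      (ciSup_le fun k => (hmono (k.le_add_right n)).trans (le_ciSup Ordinal.bddAbove_of_small k))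
      (ciSup_le fun k => le_ciSup Ordinal.bddAbove_of_small (k + n))
  have hlt : ⨆ k, nxt (C k) η < l := iSup_lt_of_countable hl fun k => (hC k).nxt_lt hη
  rw [hshift] at hlt ⊢
  exact (hC n).iSup_mem (fun k => hanti (n.le_add_left k) ((hC (k + n)).nxt_mem hη)) hlt

theorem IsClubIn.le_of_notMem_biUnion_Ico (hC : IsClubIn C l) {f : Ordinal → Ordinal}
    (hf : ∀ α β, α ≤ β → β < l → f α ≤ f β) {η ζ : Ordinal}
    (hη : η ∈ C) (hηζ : η ≤ ζ) (hζ : ζ < l) (hζA : ζ ∉ ⋃ δ ∈ C, Ico δ (δ + f δ)) :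
    f η ≤ ζ := by
  -- the last point of `C` up to `ζ` starts an interval that ends before `ζ`
  have hne : (C ∩ Iic ζ).Nonempty := ⟨η, hη, hηζ⟩
  set η' := sSup (C ∩ Iic ζ)
  have hη'C : η' ∈ C := hC.sSup_inter_Iic_mem hζ hne
  have hη'ζ : η' ≤ ζ := csSup_le hne fun _ hy => hy.2
  have hηη' : η ≤ η' := le_csSup ⟨ζ, fun _ hy => hy.2⟩ ⟨hη, hηζ⟩
  have hend : η' + f η' ≤ ζ := not_lt.1 fun h => hζA (mem_biUnion hη'C ⟨hη'ζ, h⟩)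
  calc f η ≤ f η' := hf η η' hηη' (hη'ζ.trans_lt hζ)
    _ ≤ η' + f η' := le_add_self
    _ ≤ ζ := hend

end Clubs

theorem exists_lt_forall_lt_of_step {l : Ordinal.{u}} (hl : ℵ₀ < l.cof) {C : ℕ → Set Ordinal}
    (hC : ∀ n, IsClubIn (C n) l) (hanti : Antitone C) {g : ℕ → Ordinal → Ordinal}
    {F : Ordinal → Ordinal} (hF : ∀ α β, α ≤ β → β < l → F α ≤ F β)
    (hstep : ∀ n β δ, δ < l → β < nxt (C n) δ → g n β < g (n + 1) δ)
    (hkey : ∀ n, ∃ ε < l, ∀ η ∈ C (n + 1), ε ≤ η → g (n + 1) η < F η) :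
    ∃ α < l, ∀ β, α < β → β < l → g 0 β < F β := by
  choose ε hεl hε using hkey
  have hCω := IsClubIn.iInter hl hC
  obtain ⟨α, hαC, hεα⟩ := hCω.2.2 _ (iSup_lt_of_countable hl hεl)
  refine ⟨α, hCω.1 hαC, fun β hαβ hβ => ?_⟩
  have hne : ((⋂ n, C n) ∩ Iic β).Nonempty := ⟨α, hαC, hαβ.le⟩
  have hbdd : BddAbove ((⋂ n, C n) ∩ Iic β) := ⟨β, fun _ h => h.2⟩
  set η := sSup ((⋂ n, C n) ∩ Iic β)
  have hηC : η ∈ ⋂ n, C n := hCω.sSup_inter_Iic_mem hβ hne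
  have hηβ : η ≤ β := csSup_le hne fun _ h => h.2
  have hαη : α ≤ η := le_csSup hbdd ⟨hαC, hαβ.le⟩
  have hηl : η < l := hηβ.trans_lt hβ
  -- otherwise `⨆ n, nxt (C n) η` would be a point of `⋂ n, C n` in `(η, β]`
  obtain ⟨n, hn⟩ : ∃ n, β < nxt (C n) η := by
    by_contra! h
    have hρη : ⨆ n, nxt (C n) η ≤ η :=
      le_csSup hbdd ⟨iSup_nxt_mem_iInter hl hC hanti hηl, ciSup_le h⟩
    exact hρη.not_gt (((hC 0).lt_nxt hηl).trans_le (le_ciSup Ordinal.bddAbove_of_small 0))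
  have hg : ∀ k, g 0 β ≤ g k β := by
    intro k
    induction k with
    | zero => rfl
    | succ k ih => exact ih.trans (hstep k β β hβ ((hC k).lt_nxt hβ)).le
  calc g 0 β ≤ g n β := hg n
    _ < g (n + 1) η := hstep n β η hηl hn
    _ < F η := hε n η (mem_iInter.1 hηC (n + 1))
        ((le_ciSup Ordinal.bddAbove_of_small n).trans (hεα.le.trans hαη))
    _ ≤ F β := hF η β hηβ hβ

section Enumeration

variable {κ : Cardinal.{u}} {C : Set Ordinal.{u}}

/-- The increasing enumeration of `C`, padded by `Ici l` since `enumOrd` needs an unbounded set. -/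
def clubEnum (C : Set Ordinal) (l : Ordinal) : Ordinal → Ordinal :=
  enumOrd (C ∪ Ici l)

theorem not_bddAbove_union_Ici (C : Set Ordinal) (l : Ordinal) : ¬ BddAbove (C ∪ Ici l) :=
  fun h => not_bddAbove_Ici l (h.mono subset_union_right)

theorem clubEnum_strictMono (C : Set Ordinal) (l : Ordinal) : StrictMono (clubEnum C l) :=
  enumOrd_strictMono (not_bddAbove_union_Ici C l)

theorem clubEnum_mem (hreg : κ.IsRegular) (hC : IsClubIn C κ.ord) {i : Ordinal}
    (hi : i < κ.ord) : clubEnum C κ.ord i ∈ C := by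
  induction i using WellFoundedLT.induction with
  | _ j IH =>
  have hsup : ⨆ k : Iio j, clubEnum C κ.ord k < κ.ord :=
    iSup_Iio_lt_ord hreg hi fun k hk => hC.1 (IH k hk (hk.trans hi))
  have hle : clubEnum C κ.ord j ≤ nxt C (⨆ k : Iio j, clubEnum C κ.ord k) :=
    enumOrd_le_of_forall_lt (Or.inl (hC.nxt_mem hsup)) fun k hk =>
      (Ordinal.le_iSup (fun k : Iio j => clubEnum C κ.ord k) ⟨k, hk⟩).trans_lt (hC.lt_nxt hsup)
  exact (enumOrd_mem (not_bddAbove_union_Ici C _) j).resolve_right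
    (hle.trans_lt (hC.nxt_lt hsup)).not_ge

theorem exists_clubEnum_eq (hC : IsClubIn C κ.ord) {β : Ordinal} (hβ : β ∈ C) :
    ∃ i < κ.ord, clubEnum C κ.ord i = β := by
  obtain ⟨i, hi⟩ := enumOrd_surjective (not_bddAbove_union_Ici C κ.ord) (Or.inl hβ)
  exact ⟨i, ((clubEnum_strictMono C _).le_apply.trans_eq hi).trans_lt (hC.1 hβ), hi⟩

theorem inter_Iio_clubEnum (hreg : κ.IsRegular) (hC : IsClubIn C κ.ord) {i : Ordinal}
    (hi : i < κ.ord) : C ∩ Iio (clubEnum C κ.ord i) = clubEnum C κ.ord '' Iio i := by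
  ext x
  constructor
  · rintro ⟨hxC, hxi⟩
    obtain ⟨j, -, rfl⟩ := exists_clubEnum_eq hC hxC
    exact ⟨j, (clubEnum_strictMono C _).lt_iff_lt.1 hxi, rfl⟩
  · rintro ⟨j, hj, rfl⟩
    exact ⟨clubEnum_mem hreg hC (hj.trans hi), clubEnum_strictMono C _ hj⟩

theorem setOtp_inter_Iio_clubEnum (hreg : κ.IsRegular) (hC : IsClubIn C κ.ord) {i : Ordinal}
    (hi : i < κ.ord) : setOtp (C ∩ Iio (clubEnum C κ.ord i)) = i := by
  rw [inter_Iio_clubEnum hreg hC hi]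
  exact setOtp_eq_of_orderIso
    (((clubEnum_strictMono C _).strictMonoOn _).orderIso _ _)

end Enumeration

section FP

variable {κ : Cardinal.{u}} {α : Ordinal.{u}}

theorem fP_eq_clubEnum (hreg : κ.IsRegular) (hunc : ℵ₀ < κ) (p : Q0 κ.ord) (hα : α < κ.ord) :
    fP κ.ord p α = clubEnum p.C κ.ord (ω * α + ω) := by
  have hi := omega0_mul_add_omega0_lt_ord hunc hα
  have hmem : clubEnum p.C κ.ord (ω * α + ω) ∈
      {β | β ∈ p.C ∧ setOtp (p.C ∩ Iio β) = ω * α + ω} :=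
    ⟨clubEnum_mem hreg p.club hi, setOtp_inter_Iio_clubEnum hreg p.club hi⟩
  refine le_antisymm (csInf_le' hmem) (le_csInf ⟨_, hmem⟩ ?_)
  rintro β ⟨hβC, hβ⟩
  obtain ⟨j, hj, rfl⟩ := exists_clubEnum_eq p.club hβC
  rw [setOtp_inter_Iio_clubEnum hreg p.club hj] at hβ
  rw [hβ]

theorem fP_mem (hreg : κ.IsRegular) (hunc : ℵ₀ < κ) (p : Q0 κ.ord) (hα : α < κ.ord) :
    fP κ.ord p α ∈ p.C := by
  rw [fP_eq_clubEnum hreg hunc p hα]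
  exact clubEnum_mem hreg p.club (omega0_mul_add_omega0_lt_ord hunc hα)

theorem fP_mono (hreg : κ.IsRegular) (hunc : ℵ₀ < κ) (p : Q0 κ.ord) {β : Ordinal}
    (hαβ : α ≤ β) (hβ : β < κ.ord) : fP κ.ord p α ≤ fP κ.ord p β := by
  rw [fP_eq_clubEnum hreg hunc p (hαβ.trans_lt hβ), fP_eq_clubEnum hreg hunc p hβ]
  exact (clubEnum_strictMono _ _).monotone (add_le_add_left (mul_le_mul_right hαβ _) _)

theorem nxt_lt_fP (hreg : κ.IsRegular) (hunc : ℵ₀ < κ) (p : Q0 κ.ord) (hα : α < κ.ord) :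
    nxt p.C α < fP κ.ord p α := by
  have hlt : ω * α + 1 < ω * α + ω := (add_lt_add_iff_left _).2 one_lt_omega0
  have hi := omega0_mul_add_omega0_lt_ord hunc hα
  rw [fP_eq_clubEnum hreg hunc p hα]
  refine (nxt_le_of_mem (clubEnum_mem hreg p.club (hlt.trans hi)) ?_).trans_lt
    (clubEnum_strictMono _ _ hlt)
  calc α ≤ ω * α := Ordinal.le_mul_right α omega0_pos
    _ < ω * α + 1 := lt_add_one _
    _ ≤ clubEnum p.C κ.ord (ω * α + 1) := (clubEnum_strictMono _ _).le_apply

end FP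

section Majorant

variable {κ : Cardinal.{u}} {C : Set Ordinal.{u}}

def supBelow (g : Ordinal.{u} → Ordinal.{u}) (x : Ordinal.{u}) : Ordinal.{u} :=
  ⨆ ξ : Iio x, g ξ

theorem le_supBelow (g : Ordinal → Ordinal) {ξ x : Ordinal} (h : ξ < x) : g ξ ≤ supBelow g x :=
  Ordinal.le_iSup (fun ξ : Iio x => g ξ) ⟨ξ, h⟩

theorem supBelow_mono (g : Ordinal → Ordinal) {x x' : Ordinal} (h : x ≤ x') :
    supBelow g x ≤ supBelow g x' :=
  Ordinal.iSup_le fun ξ => le_supBelow g (ξ.2.trans_le h)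

def nxtMajorant (C : Set Ordinal) (g : Ordinal → Ordinal) (δ : Ordinal) : Ordinal :=
  supBelow g (nxt C δ) + nxt C δ

theorem lt_nxtMajorant {g : Ordinal → Ordinal} {β δ : Ordinal} (hβ : β < nxt C δ) :
    g β < nxtMajorant C g δ :=
  (le_supBelow g hβ).trans_lt (lt_add_of_pos_right _ ((zero_le (a := β)).trans_lt hβ))

theorem nxtMajorant_mem_Flam (hreg : κ.IsRegular) (hunc : ℵ₀ < κ) (hC : IsClubIn C κ.ord)
    {g : Ordinal → Ordinal} (hg : g ∈ funSp κ.ord) : nxtMajorant C g ∈ Flam κ.ord := by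
  refine ⟨fun α hα => ?_, fun α β hαβ hβ => ?_, fun γ hγ => ⟨γ, hγ, ?_⟩⟩
  · have hnxt := hC.nxt_lt hα
    exact isPrincipal_add_ord hunc.le
      (iSup_Iio_lt_ord hreg hnxt fun ξ hξ => hg ξ (hξ.trans hnxt)) hnxt
  · have hnxt := hC.nxt_mono hαβ hβ
    exact add_le_add (supBelow_mono g hnxt) hnxt
  · exact (hC.lt_nxt hγ).le.trans le_add_self

end Majorant

section Filters

variable {κ : Cardinal.{u}}

theorem aleph0_lt_cof_ord (hreg : κ.IsRegular) (hunc : ℵ₀ < κ) : ℵ₀ < κ.ord.cof := by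
  rwa [hreg.cof_ord]

theorem isClubIn_Iio (hunc : ℵ₀ < κ) : IsClubIn (Iio κ.ord) κ.ord :=
  ⟨subset_rfl, fun _ hδ _ _ => hδ,
    fun α hα => ⟨α + 1, (isSuccLimit_ord hunc.le).add_one_lt hα, lt_add_one α⟩⟩

theorem IsUltraOn.nonempty_of_mem {Z : Set Ordinal} {D : Set (Set Ordinal)} (h : IsUltraOn Z D)
    {A : Set Ordinal} (hA : A ∈ D) : A.Nonempty :=
  nonempty_iff_ne_empty.2 fun he => h.2.2.1 (he ▸ hA)

theorem biUnion_Ico_subset_Iio (hunc : ℵ₀ < κ) {C : Set Ordinal} (hC : C ⊆ Iio κ.ord)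
    {f : Ordinal → Ordinal} (hf : f ∈ funSp κ.ord) :
    ⋃ δ ∈ C, Ico δ (δ + f δ) ⊆ Iio κ.ord :=
  iUnion₂_subset fun δ hδ _ hx => hx.2.trans (isPrincipal_add_ord hunc.le (hC hδ) (hf δ (hC hδ)))

theorem WeaklyReasonable.exists_club_subset (hreg : κ.IsRegular) (hunc : ℵ₀ < κ)
    {D : Set (Set Ordinal)} (hU : IsUltrafilterOn κ.ord D) (hD : WeaklyReasonable κ.ord D)
    {f : Ordinal → Ordinal} (hf : f ∈ Flam κ.ord) {C₀ : Set Ordinal}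
    (hC₀ : IsClubIn C₀ κ.ord) :
    ∃ C, IsClubIn C κ.ord ∧ C ⊆ C₀ ∧ ⋃ δ ∈ C, Ico δ (δ + f δ) ∉ D := by
  obtain ⟨C, hC, hCD⟩ := hD f hf
  refine ⟨C ∩ C₀, hC.inter (aleph0_lt_cof_ord hreg hunc) hC₀, inter_subset_right,
    fun hmem => hCD (hU.2.2.2.1 _ _ hmem ?_ (biUnion_Ico_subset_Iio hunc hC.1 hf.1))⟩
  exact biUnion_subset_biUnion_left inter_subset_left

theorem exists_mem_Ico_fP_of_mem_fil (hreg : κ.IsRegular) (hunc : ℵ₀ < κ) {p : Q0 κ.ord}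
    {A : Set Ordinal} (hA : A ∈ fil κ.ord p) :
    ∃ ε < κ.ord, ∀ η, ε ≤ η → η < κ.ord → ∃ ζ ∈ A, η ≤ ζ ∧ ζ < fP κ.ord p η := by
  obtain ⟨-, ε, hε, hAε⟩ := hA
  refine ⟨ε, hε, fun η hεη hη => ?_⟩
  -- the block `Z^p_δ` starting at `δ = nxt p.C η` ends by `fP η`, and `A` meets it
  have hδC := p.club.nxt_mem hη
  have hηδ := p.club.lt_nxt hη
  obtain ⟨ζ, hζA, hδζ, hζ⟩ :=
    (p.ultra _ hδC).nonempty_of_mem (hAε _ hδC (hεη.trans hηδ.le))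
  exact ⟨ζ, hζA, hηδ.le.trans hδζ,
    hζ.trans_le (nxt_le_of_mem (fP_mem hreg hunc p hη) (nxt_lt_fP hreg hunc p hη))⟩

theorem exists_lt_fP_of_mem_fil (hreg : κ.IsRegular) (hunc : ℵ₀ < κ) {p : Q0 κ.ord}
    {C : Set Ordinal} (hC : IsClubIn C κ.ord) {f : Ordinal → Ordinal}
    (hf : ∀ α β, α ≤ β → β < κ.ord → f α ≤ f β)
    (hB : Iio κ.ord \ ⋃ δ ∈ C, Ico δ (δ + f δ) ∈ fil κ.ord p) :
    ∃ ε < κ.ord, ∀ η ∈ C, ε ≤ η → f η < fP κ.ord p η := by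
  obtain ⟨ε, hε, h⟩ := exists_mem_Ico_fP_of_mem_fil hreg hunc hB
  refine ⟨ε, hε, fun η hηC hεη => ?_⟩
  obtain ⟨ζ, hζB, hηζ, hζF⟩ := h η hεη (hC.1 hηC)
  exact (hC.le_of_notMem_biUnion_Ico hf hηC hηζ hζB.1 hζB.2).trans_lt hζF

theorem DirLtOn.exists_mem_fil {l : Ordinal} {G : Set (Q0 l)}
    (hdir : DirLtOn l (aleph 1) G (le0 l)) {A : ℕ → Set Ordinal} (hA : ∀ n, A n ∈ filG l G) :
    ∃ r ∈ G, ∀ n, A n ∈ fil l r := by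
  simp only [filG, mem_iUnion₂] at hA
  choose p hpG hp using hA
  obtain ⟨r, hrG, hr⟩ := hdir.2 (range p) (range_subset_iff.2 hpG)
    ((countable_range p).le_aleph0.trans_lt aleph0_lt_aleph_one)
  exact ⟨r, hrG, fun n => hr _ ⟨n, rfl⟩ (hp n)⟩

theorem exists_majorant_sequence (hreg : κ.IsRegular) (hunc : ℵ₀ < κ)
    {D : Set (Set Ordinal)} (hU : IsUltrafilterOn κ.ord D) (hD : WeaklyReasonable κ.ord D)
    {g : Ordinal → Ordinal} (hg : g ∈ funSp κ.ord) :
    ∃ (f : ℕ → Ordinal → Ordinal) (C : ℕ → Set Ordinal), f 0 = g ∧ Antitone C ∧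
      (∀ n, IsClubIn (C n) κ.ord) ∧
      (∀ n β δ, δ < κ.ord → β < nxt (C n) δ → f n β < f (n + 1) δ) ∧
      ∀ n, f (n + 1) ∈ Flam κ.ord ∧ Iio κ.ord \ ⋃ δ ∈ C (n + 1), Ico δ (δ + f (n + 1) δ) ∈ D := by
  have hshrink : ∀ (f : Ordinal → Ordinal) (C₀ : Set Ordinal), ∃ C, f ∈ Flam κ.ord →
      IsClubIn C₀ κ.ord → IsClubIn C κ.ord ∧ C ⊆ C₀ ∧ ⋃ δ ∈ C, Ico δ (δ + f δ) ∉ D := by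
    intro f C₀
    by_cases h : f ∈ Flam κ.ord ∧ IsClubIn C₀ κ.ord
    · obtain ⟨C, hC⟩ := hD.exists_club_subset hreg hunc hU h.1 h.2
      exact ⟨C, fun _ _ => hC⟩
    · exact ⟨∅, fun hf hC₀ => (h ⟨hf, hC₀⟩).elim⟩
  choose shrink hshrink using hshrink
  let s : ℕ → (Ordinal → Ordinal) × Set Ordinal := fun n => Nat.rec (g, Iio κ.ord)
    (fun _ x => (nxtMajorant x.2 x.1, shrink (nxtMajorant x.2 x.1) x.2)) n
  have hs : ∀ n, (s n).1 ∈ funSp κ.ord ∧ IsClubIn (s n).2 κ.ord := by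
    intro n
    induction n with
    | zero => exact ⟨hg, isClubIn_Iio hunc⟩
    | succ n ih =>
      have hf := nxtMajorant_mem_Flam hreg hunc ih.2 ih.1
      exact ⟨hf.1, (hshrink _ _ hf ih.2).1⟩
  have hflam : ∀ n, (s (n + 1)).1 ∈ Flam κ.ord := fun n =>
    nxtMajorant_mem_Flam hreg hunc (hs n).2 (hs n).1
  refine ⟨fun n => (s n).1, fun n => (s n).2, rfl,
    antitone_nat_of_succ_le fun n => (hshrink _ _ (hflam n) (hs n).2).2.1, fun n => (hs n).2,
    fun n β δ _ hβ => lt_nxtMajorant hβ, fun n => ⟨hflam n, ?_⟩⟩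
  exact (hU.2.2.2.2.2 _ (biUnion_Ico_subset_Iio hunc (hs (n + 1)).2.1 (hflam n).1)).resolve_left
    (hshrink _ _ (hflam n) (hs n).2).2.2

end Filters

theorem stmt17_general (κ : Cardinal) (hreg : κ.IsRegular) (hunc : ℵ₀ < κ)
    (G : Set (Q0 κ.ord))
    (hdir : DirLtOn κ.ord (Cardinal.aleph 1) G (le0 κ.ord))
    (hult : IsUltrafilterOn κ.ord (filG κ.ord G))
    (hwr : WeaklyReasonable κ.ord (filG κ.ord G)) :
    {f | ∃ p ∈ G, f = fP κ.ord p} ⊆ funSp κ.ord ∧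
    IsDominating κ.ord {f | ∃ p ∈ G, f = fP κ.ord p} ∧
    dLam κ.ord ≤ #G := by
  have hfun : {f | ∃ p ∈ G, f = fP κ.ord p} ⊆ funSp κ.ord := by
    rintro _ ⟨p, -, rfl⟩ α hα
    exact p.club.1 (fP_mem hreg hunc p hα)
  have hdom : IsDominating κ.ord {f | ∃ p ∈ G, f = fP κ.ord p} := by
    intro g hg
    obtain ⟨f, C, rfl, hanti, hC, hstep, hD⟩ := exists_majorant_sequence hreg hunc hult hwr hg
    obtain ⟨r, hrG, hr⟩ := hdir.exists_mem_fil fun n => (hD n).2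
    obtain ⟨α, hα, hlt⟩ := exists_lt_forall_lt_of_step (aleph0_lt_cof_ord hreg hunc) hC hanti
      (fun _ _ h hβ => fP_mono hreg hunc r h hβ) hstep
      fun n => exists_lt_fP_of_mem_fil hreg hunc (hC (n + 1)) (hD n).1.2.1 (hr n)
    exact ⟨_, ⟨r, hrG, rfl⟩, α, hα, hlt⟩
  have himage : {f | ∃ p ∈ G, f = fP κ.ord p} = fP κ.ord '' G := by
    ext f
    simp [eq_comm]
  refine ⟨hfun, hdom, (csInf_le' ⟨_, hfun, hdom, rfl⟩ : dLam κ.ord ≤ _).trans ?_⟩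
  rw [himage]
  exact mk_image_le

/-- Theorem 3.1(1): if `G*₀ ⊆ Q⁰_λ` is `(<ℵ₁)`-directed w.r.t. `≤⁰` and `fil(G*₀)` is
a weakly reasonable (uniform) ultrafilter, then `{f_p : p ∈ G*₀}` is a dominating
family in `^λλ`; in particular `|G*₀| ≥ 𝔡_λ`. -/
theorem stmt17 (κ : Cardinal) (hreg : κ.IsRegular) (hunc : ℵ₀ < κ)
    (G : Set (Q0 κ.ord))
    (hdir : DirLtOn κ.ord (Cardinal.aleph 1) G (le0 κ.ord))
    (hult : IsUltrafilterOn κ.ord (filG κ.ord G))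
    (huni : IsUniformOn κ.ord (filG κ.ord G))
    (hwr : WeaklyReasonable κ.ord (filG κ.ord G)) :
    {f | ∃ p ∈ G, f = fP κ.ord p} ⊆ funSp κ.ord ∧
    IsDominating κ.ord {f | ∃ p ∈ G, f = fP κ.ord p} ∧
    dLam κ.ord ≤ #G :=
  stmt17_general κ hreg hunc G hdir hult hwr

end Sh830

end
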